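/- arXiv:1009.4830 — 3 statements merged into one kernel-verified Lean document; each statement's English description precedes it below -/
import Mathlib

section
/- Let V be a finite set and let S ⊆ {0,1}^V be nonempty. Then there exists a family of sets (D_α)_{α ∈ S} with D_α ⊆ V such that the subcubes B(D_α, α) := { β ∈ {0,1}^V : β(x) = α(x) for all x ∈ D_α } for α ∈ S are pairwise disjoint and their union is all of {0,1}^V. In particular α ∈ B(D_α, α) for every α ∈ S. -/
/-!
Split `S` by the value of a variable `x` on which two of its members differ: both halves are
proper nonempty subsets, so by induction each has a subcube partition of `{0,1}^V`. Adding `x` to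
every defining set restricts the cubes of the half with `α x = b` to the slice `β x = b`, and the
two slices partition `{0,1}^V`. A singleton `{α}` is handled by the whole cube `B(∅, α)`.
-/

open Finset

section

variable {V : Type*}

def subcube (D : Finset V) (α : V → Bool) : Set (V → Bool) :=
  {β | ∀ x ∈ D, β x = α x}

@[simp]
theorem mem_subcube {D : Finset V} {α β : V → Bool} :
    β ∈ subcube D α ↔ ∀ x ∈ D, β x = α x :=
  Iff.rfl

theorem mem_subcube_insert [DecidableEq V] {D : Finset V} {x : V} {α β : V → Bool} :
    β ∈ subcube (insert x D) α ↔ β x = α x ∧ β ∈ subcube D α := by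
  simp only [mem_subcube, forall_mem_insert]

def IsSubcubePartition (S : Finset (V → Bool)) (D : (V → Bool) → Finset V) : Prop :=
  (S : Set (V → Bool)).PairwiseDisjoint (fun α => subcube (D α) α) ∧
    ∀ β, ∃ α ∈ S, β ∈ subcube (D α) α

theorem isSubcubePartition_singleton (α : V → Bool) :
    IsSubcubePartition {α} (fun _ => ∅) :=
  ⟨by simp, fun _ => ⟨α, mem_singleton_self α, by simp⟩⟩

theorem IsSubcubePartition.insert_of_filter [DecidableEq V] {S : Finset (V → Bool)} (x : V)
    {D : Bool → (V → Bool) → Finset V}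
    (hD : ∀ b, IsSubcubePartition (S.filter (· x = b)) (D b)) :
    IsSubcubePartition S (fun α => insert x (D (α x) α)) := by
  refine ⟨fun α hα α' hα' hne => Set.disjoint_left.mpr fun β hβ hβ' => ?_, fun β => ?_⟩
  · rw [mem_subcube_insert] at hβ hβ'
    have hx : α' x = α x := hβ'.1.symm.trans hβ.1
    rw [hx] at hβ'
    exact Set.disjoint_left.mp ((hD (α x)).1 (by simpa using hα) (by simpa [hx] using hα') hne)
      hβ.2 hβ'.2
  · obtain ⟨α, hα, hβα⟩ := (hD (β x)).2 β
    rw [mem_filter] at hα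
    refine ⟨α, hα.1, ?_⟩
    rw [mem_subcube_insert, hα.2]
    exact ⟨rfl, hβα⟩

theorem exists_isSubcubePartition [DecidableEq V] {S : Finset (V → Bool)} (hS : S.Nonempty) :
    ∃ D, IsSubcubePartition S D := by
  induction S using Finset.strongInduction with
  | H S ih =>
    obtain ⟨α, rfl⟩ | ⟨α₁, hα₁, α₂, hα₂, hne⟩ := hS.exists_eq_singleton_or_nontrivial
    · exact ⟨_, isSubcubePartition_singleton α⟩
    obtain ⟨x, hx⟩ := Function.ne_iff.mp hne
    have hhalf : ∀ b, ∃ D, IsSubcubePartition (S.filter (· x = b)) D := by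
      intro b
      obtain ⟨γ, hγ, hγb, δ, hδ, hδb⟩ : ∃ γ ∈ S, γ x = b ∧ ∃ δ ∈ S, δ x ≠ b := by
        rcases eq_or_ne (α₁ x) b with h | h
        · exact ⟨α₁, hα₁, h, α₂, hα₂, h ▸ hx.symm⟩
        · exact ⟨α₂, hα₂, Bool.not_inj ((Bool.eq_not.mpr hx).symm.trans (Bool.eq_not.mpr h)),
            α₁, hα₁, h⟩
      exact ih _ (filter_ssubset.mpr ⟨δ, hδ, hδb⟩) ⟨γ, mem_filter.mpr ⟨hγ, hγb⟩⟩
    choose D hD using hhalf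
    exact ⟨_, IsSubcubePartition.insert_of_filter x hD⟩

end

theorem subcube_partition_exists_general {V : Type*} [DecidableEq V]
    (S : Finset (V → Bool)) (hS : S.Nonempty) :
    ∃ D : (V → Bool) → Finset V,
      (∀ α ∈ S, ∀ x ∈ D α, α x = α x) ∧
      (∀ α ∈ S, ∀ α' ∈ S, α ≠ α' →
        ∀ β : V → Bool, ¬ ((∀ x ∈ D α, β x = α x) ∧ (∀ x ∈ D α', β x = α' x))) ∧
      (∀ β : V → Bool, ∃ α ∈ S, ∀ x ∈ D α, β x = α x) := by
  obtain ⟨D, hdisj, hcover⟩ := exists_isSubcubePartition hS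
  exact ⟨D, fun _ _ _ _ => rfl,
    fun α hα α' hα' hne β hβ => Set.disjoint_left.mp (hdisj hα hα' hne) hβ.1 hβ.2, hcover⟩

/-- For a nonempty set `S` of assignments over a finite variable set `V`, there is a
choice of defining variables `D α ⊆ V` for each `α ∈ S` such that the subcubes
`B(D α, α) = {β : β agrees with α on D α}` are pairwise disjoint and cover all of
`{0,1}^V`; moreover `α ∈ B(D α, α)` automatically. -/
theorem subcube_partition_exists {V : Type*} [Fintype V] [DecidableEq V]
    (S : Finset (V → Bool)) (hS : S.Nonempty) :
    ∃ D : (V → Bool) → Finset V,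
      (∀ α ∈ S, ∀ x ∈ D α, α x = α x) ∧
      (∀ α ∈ S, ∀ α' ∈ S, α ≠ α' →
        ∀ β : V → Bool, ¬ ((∀ x ∈ D α, β x = α x) ∧ (∀ x ∈ D α', β x = α' x))) ∧
      (∀ β : V → Bool, ∃ α ∈ S, ∀ x ∈ D α, β x = α x) :=
  subcube_partition_exists_general S hS
end

section
/- Let F be a satisfiable CNF formula over finite variable set V, let S = sat(F), let V_C be the set of critical variables of F, and let ({B(D_α,α)})_{α∈S} be any partition of {0,1}^V into pairwise disjoint subcubes with α ∈ B(D_α,α) for each α ∈ S. Then for every α ∈ S, V_C ⊆ V \ D_α, i.e. every critical variable of F is a nondefining variable of B(D_α,α) for every α ∈ S. -/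
/-- An assignment satisfies a CNF formula (finite set of clauses, each a finite set of
literals, a literal being a variable paired with a polarity) if every clause contains
a satisfied literal. -/
def SatCNF {V : Type*} (α : V → Bool) (F : Finset (Finset (V × Bool))) : Prop :=
  ∀ C ∈ F, ∃ l ∈ C, α l.1 = l.2

/-- Given a partition of `{0,1}^V` into pairwise disjoint subcubes `B(D α, α)`, one
around each satisfying assignment `α` of a satisfiable CNF formula `F`, every critical
variable of `F` is a nondefining variable of every cube: `x ∉ D α` for all
satisfying `α`. -/
theorem critical_vars_are_nondefining {V : Type*} [Fintype V] [DecidableEq V]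
    (F : Finset (Finset (V × Bool)))
    (D : (V → Bool) → Finset V)
    (hdisj : ∀ α α' : V → Bool, SatCNF α F → SatCNF α' F → α ≠ α' →
      ∀ β : V → Bool, ¬ ((∀ x ∈ D α, β x = α x) ∧ (∀ x ∈ D α', β x = α' x)))
    (hcover : ∀ β : V → Bool, ∃ α : V → Bool, SatCNF α F ∧ ∀ x ∈ D α, β x = α x)
    (x : V)
    (hcrit : ∀ α β : V → Bool, SatCNF α F → SatCNF β F → α x = β x) :
    ∀ α : V → Bool, SatCNF α F → x ∉ D α := by
  intro α hα hx
  set β := Function.update α x (!α x) with hβ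
  obtain ⟨α', hα', hagree⟩ := hcover β
  have hβx : β x = !α x := Function.update_self x (!α x) α
  have hax : α' x = α x := hcrit α' α hα' hα
  have hx' : x ∉ D α' := by
    intro hxd
    have := hagree x hxd
    rw [hβx, hax] at this
    simp at this
  by_cases h : α = α'
  · subst h; exact hx' hx
  · exact hdisj α α' hα hα' h α
      ⟨fun y _ => rfl, fun y hy => by
        have := hagree y hy
        rwa [hβ, Function.update_of_ne (fun he : y = x => hx' (he ▸ hy))] at this⟩
end

section
/- Let n ≥ 0, let r ∈ (0,1], and let (a_i)_{i=0}^n and (b_i)_{i=0}^n be sequences of nonnegative reals satisfying a_0 + b_0 = 1, a_{i+1} + b_{i+1} ≥ r · b_i for all 0 ≤ i < n, and b_n = 0. Then there exists j with 0 ≤ j ≤ n such that a_j ≥ r^j / (n+1). -/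
/-!
Put `s i = a i + b i`. Dividing the hypothesis `r * b i ≤ s (i + 1)` by `r ^ (i + 1)` shows that
the potential `∑ k < i, a k / r ^ k + s i / r ^ i` does not decrease in `i`. Comparing `i = 0`
with `i = n`, where `b n = 0`, gives `1 ≤ ∑ k ≤ n, a k / r ^ k`, so one of these `n + 1` terms
is at least `1 / (n + 1)`.
-/

open Finset

section

variable {r : ℝ} {a b : ℕ → ℝ}

lemma div_pow_le_div_pow_succ_of_mul_le (hr : 0 < r) {x y : ℝ} (h : r * x ≤ y) (i : ℕ) :
    x / r ^ i ≤ y / r ^ (i + 1) := by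
  rw [div_le_div_iff₀ (pow_pos hr i) (pow_pos hr (i + 1)), pow_succ]
  linarith [mul_le_mul_of_nonneg_right h (pow_pos hr i).le]

lemma add_le_sum_div_pow_add (hr : 0 < r) {n : ℕ}
    (hstep : ∀ i < n, r * b i ≤ a (i + 1) + b (i + 1)) :
    a 0 + b 0 ≤ ∑ k ∈ range n, a k / r ^ k + (a n + b n) / r ^ n := by
  induction n with
  | zero => simp
  | succ n ih =>
    calc a 0 + b 0 ≤ ∑ k ∈ range n, a k / r ^ k + (a n + b n) / r ^ n :=
          ih fun i hi ↦ hstep i (hi.trans n.lt_succ_self)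
      _ = ∑ k ∈ range (n + 1), a k / r ^ k + b n / r ^ n := by
          rw [sum_range_succ, add_div]; ring
      _ ≤ ∑ k ∈ range (n + 1), a k / r ^ k + (a (n + 1) + b (n + 1)) / r ^ (n + 1) :=
          (add_le_add_iff_left _).mpr
            (div_pow_le_div_pow_succ_of_mul_le hr (hstep n n.lt_succ_self) n)

end

theorem exists_good_guess_level_general (n : ℕ) (r : ℝ) (hr0 : 0 < r)
    (a b : ℕ → ℝ)
    (hinit : a 0 + b 0 = 1)
    (hstep : ∀ i < n, r * b i ≤ a (i + 1) + b (i + 1))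
    (hend : b n = 0) :
    ∃ j ≤ n, r ^ j / (n + 1) ≤ a j := by
  have hsum :
      ∑ _k ∈ range (n + 1), (1 / (n + 1) : ℝ) ≤ ∑ k ∈ range (n + 1), a k / r ^ k := by
    have h := add_le_sum_div_pow_add hr0 hstep
    rw [hinit, hend, add_zero, ← sum_range_succ] at h
    rwa [sum_const, card_range, nsmul_eq_mul, Nat.cast_add_one, mul_one_div_cancel (by positivity)]
  obtain ⟨j, hj, hle⟩ := exists_le_of_sum_le nonempty_range_add_one hsum
  refine ⟨j, mem_range_succ_iff.mp hj, ?_⟩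
  rwa [le_div_iff₀ (pow_pos hr0 j), one_div_mul_eq_div] at hle

/-- The arithmetic core of the guessing preprocessing: if `a 0 + b 0 = 1`, the
sequences are nonnegative, `a (i+1) + b (i+1) ≥ r · b i` for all `i < n`, and
`b n = 0`, then some `j ≤ n` satisfies `a j ≥ r^j / (n+1)`. -/
theorem exists_good_guess_level (n : ℕ) (r : ℝ) (hr0 : 0 < r) (hr1 : r ≤ 1)
    (a b : ℕ → ℝ) (ha : ∀ i, 0 ≤ a i) (hb : ∀ i, 0 ≤ b i)
    (hinit : a 0 + b 0 = 1)
    (hstep : ∀ i < n, r * b i ≤ a (i + 1) + b (i + 1))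
    (hend : b n = 0) :
    ∃ j ≤ n, r ^ j / (n + 1) ≤ a j :=
  exists_good_guess_level_general n r hr0 a b hinit hstep hend
end
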